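/- arXiv:2311.11285 — 5 statements merged into one kernel-verified Lean document; each statement's English description precedes it below -/
import Mathlib

section
/- Let c > 0, e ≠ 0, and ε be arbitrary real numbers. Then the relative noise effect on the RQF loss is at most that on the MSE loss: |L_RQF(e+ε) − L_RQF(e)|/L_RQF(e) ≤ |(e+ε)² − e²|/e², where L_RQF(t) = t²/(t² + c). (Theorem 1 of the paper.) -/
theorem rqf_relative_noise_effect_le_mse (c e ε : ℝ) (hc : 0 < c) (he : e ≠ 0) :
    |(e + ε) ^ 2 / ((e + ε) ^ 2 + c) - e ^ 2 / (e ^ 2 + c)| / (e ^ 2 / (e ^ 2 + c)) ≤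
      |(e + ε) ^ 2 - e ^ 2| / e ^ 2 := by
  set a := (e + ε) ^ 2 with ha'
  have hb : 0 < e ^ 2 := by positivity
  have ha : 0 ≤ a := sq_nonneg _
  have hac : 0 < a + c := by linarith
  have hbc : 0 < e ^ 2 + c := by linarith
  have key : a / (a + c) - e ^ 2 / (e ^ 2 + c) = c * (a - e ^ 2) / ((a + c) * (e ^ 2 + c)) := by
    field_simp
    ring
  rw [key, abs_div, abs_mul, abs_of_pos hc,
    abs_of_pos (by positivity : (0:ℝ) < (a + c) * (e ^ 2 + c))]
  have heq : c * |a - e ^ 2| / ((a + c) * (e ^ 2 + c)) / (e ^ 2 / (e ^ 2 + c)) =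
      (c / (a + c)) * (|a - e ^ 2| / e ^ 2) := by
    field_simp
  rw [heq]
  have h1 : c / (a + c) ≤ 1 := by
    rw [div_le_one hac]; linarith
  have h2 : 0 ≤ |a - e ^ 2| / e ^ 2 := by positivity
  calc (c / (a + c)) * (|a - e ^ 2| / e ^ 2) ≤ 1 * (|a - e ^ 2| / e ^ 2) := by
        exact mul_le_mul_of_nonneg_right h1 h2
    _ = |a - e ^ 2| / e ^ 2 := one_mul _
end

section
/- Let c > 0 and e, ε be real with ε ≥ 2|e|. If (e+ε)(e² + c)² − e((e+ε)² + c)² ≥ 0, then (e+ε)(e² + c)² − e((e+ε)² + c)² − ε((e+ε)² + c)² ≤ 0. -/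
theorem rqf_condition_a (c e ε : ℝ) (hc : 0 < c) (hε : ε ≥ 2 * |e|)
    (h : (e + ε) * (e ^ 2 + c) ^ 2 - e * ((e + ε) ^ 2 + c) ^ 2 ≥ 0) :
    (e + ε) * (e ^ 2 + c) ^ 2 - e * ((e + ε) ^ 2 + c) ^ 2
      - ε * ((e + ε) ^ 2 + c) ^ 2 ≤ 0 := by
  have habs := abs_nonneg e
  have h1 : 0 ≤ e + ε := by
    have := neg_abs_le e
    linarith
  have h2 : e ^ 2 ≤ (e + ε) ^ 2 := by
    have := le_abs_self e
    have := neg_abs_le e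
    nlinarith [abs_nonneg e]
  have h3 : (e ^ 2 + c) ^ 2 ≤ ((e + ε) ^ 2 + c) ^ 2 := by
    have hp : 0 ≤ e ^ 2 + c := by positivity
    nlinarith
  nlinarith [mul_le_mul_of_nonneg_left h3 h1]
end

section
/- Let c > 0 and e, ε be real with ε ≤ −2|e|. If (e+ε)(e² + c)² − e((e+ε)² + c)² ≥ 0, then (e+ε)(e² + c)² − e((e+ε)² + c)² + ε((e+ε)² + c)² ≤ 0. -/
theorem rqf_condition_c (c e ε : ℝ) (hc : 0 < c) (hε : ε ≤ -(2 * |e|))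
    (h : (e + ε) * (e ^ 2 + c) ^ 2 - e * ((e + ε) ^ 2 + c) ^ 2 ≥ 0) :
    (e + ε) * (e ^ 2 + c) ^ 2 - e * ((e + ε) ^ 2 + c) ^ 2
      + ε * ((e + ε) ^ 2 + c) ^ 2 ≤ 0 := by
  have hae := abs_nonneg e
  have h1 : e + ε ≤ 0 := by cases abs_cases e with
    | inl h' => linarith [h'.1]
    | inr h' => linarith [h'.1]
  have h2 : ε - e ≤ 0 := by cases abs_cases e with
    | inl h' => linarith [h'.1]
    | inr h' => linarith [h'.1]
  have p1 : (0:ℝ) ≤ (e ^ 2 + c) ^ 2 := by positivity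
  have p2 : (0:ℝ) ≤ ((e + ε) ^ 2 + c) ^ 2 := by positivity
  nlinarith [mul_nonpos_of_nonpos_of_nonneg h1 p1, mul_nonpos_of_nonpos_of_nonneg h2 p2]
end

section
/- Let c > 0 and e, ε be real numbers with |ε| ≥ 2|e| and e ≠ 0, so that the RQF gradient at e is nonzero. Then |g(e+ε) − g(e)| / |g(e)| ≤ |ε| / |e|, where g(t) = 2ct/(t² + c)² is the gradient of the rational quadratic loss. -/
lemma rqf_aux (k s e : ℝ) (h0 : 0 ≤ k) (h1 : k ≤ 1) (h2 : 2 * |e| ≤ |s - e|) :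
    |k * s - e| ≤ |s - e| := by
  have h3 : k * s - e = k * (s - e) + (-(1 - k) * e) := by ring
  have h4 := abs_add_le (k * (s - e)) (-(1 - k) * e)
  rw [← h3] at h4
  have h5 : |k * (s - e)| = k * |s - e| := by rw [abs_mul, abs_of_nonneg h0]
  have h6 : |(-(1 - k)) * e| = (1 - k) * |e| := by
    rw [abs_mul, abs_neg, abs_of_nonneg (by linarith)]
  rw [h5, h6] at h4
  nlinarith [abs_nonneg (s - e), abs_nonneg e]

theorem rqf_relative_gradient_perturbation_le_mse (c e ε : ℝ) (hc : 0 < c)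
    (hεe : |ε| ≥ 2 * |e|) (he : e ≠ 0)
    (hg : 2 * c * e / (e ^ 2 + c) ^ 2 ≠ 0) :
    |2 * c * (e + ε) / ((e + ε) ^ 2 + c) ^ 2 - 2 * c * e / (e ^ 2 + c) ^ 2| /
        |2 * c * e / (e ^ 2 + c) ^ 2| ≤ |ε| / |e| := by
  have hA : (0:ℝ) < e ^ 2 + c := by positivity
  have hB : (0:ℝ) < (e + ε) ^ 2 + c := by positivity
  have habs : |e| ≤ |e + ε| := by
    have h1 : |ε| - |e + ε| ≤ |ε - (e + ε)| := abs_sub_abs_le_abs_sub _ _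
    have h2 : |ε - (e + ε)| = |e| := by rw [show ε - (e + ε) = -e by ring, abs_neg]
    linarith
  have hBA : e ^ 2 + c ≤ (e + ε) ^ 2 + c := by
    have : e ^ 2 ≤ (e + ε) ^ 2 := by
      rw [← sq_abs e, ← sq_abs (e + ε)]
      exact pow_le_pow_left₀ (abs_nonneg e) habs 2
    linarith
  set k : ℝ := (e ^ 2 + c) ^ 2 / ((e + ε) ^ 2 + c) ^ 2 with hk
  have hk0 : 0 ≤ k := by positivity
  have hk1 : k ≤ 1 := by
    rw [hk, div_le_one (by positivity)]
    exact pow_le_pow_left₀ (le_of_lt hA) hBA 2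
  have hfac : 2 * c * (e + ε) / ((e + ε) ^ 2 + c) ^ 2 - 2 * c * e / (e ^ 2 + c) ^ 2
      = (2 * c / (e ^ 2 + c) ^ 2) * (k * (e + ε) - e) := by
    rw [hk]; field_simp
  have hge : |2 * c * e / (e ^ 2 + c) ^ 2| = (2 * c / (e ^ 2 + c) ^ 2) * |e| := by
    rw [show 2 * c * e / (e ^ 2 + c) ^ 2 = (2 * c / (e ^ 2 + c) ^ 2) * e by ring,
      abs_mul, abs_of_pos (by positivity)]
  have hkey : |k * (e + ε) - e| ≤ |ε| := by
    have := rqf_aux k (e + ε) e hk0 hk1 (by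
      rw [show e + ε - e = ε by ring]; linarith)
    rwa [show e + ε - e = ε by ring] at this
  have hepos : 0 < |e| := abs_pos.mpr he
  rw [hfac, hge, abs_mul, abs_of_pos (show (0:ℝ) < 2 * c / (e ^ 2 + c) ^ 2 by positivity),
    div_le_div_iff₀ (by positivity) hepos]
  calc 2 * c / (e ^ 2 + c) ^ 2 * |k * (e + ε) - e| * |e|
      ≤ 2 * c / (e ^ 2 + c) ^ 2 * |ε| * |e| := by
        have h := mul_le_mul_of_nonneg_left hkey (le_of_lt (show (0:ℝ) < 2 * c / (e ^ 2 + c) ^ 2 by positivity))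
        exact mul_le_mul_of_nonneg_right h (abs_nonneg e)
    _ = |ε| * (2 * c / (e ^ 2 + c) ^ 2 * |e|) := by ring
end

section
/- Let c > 0 and let ε be a real random variable with E[|ε|] < ∞. For any fixed real e with e ≠ 0, E[|L_RQF(e + ε) − L_RQF(e)|] / L_RQF(e) ≤ E[|(e+ε)² − e²|] / e² whenever the right-hand side is finite, where L_RQF(t) = t²/(t² + c). That is, the expected relative noise effect on RQF is at most that on MSE for any noise distribution. -/
/-! The map `x ↦ x / (x + c)` has slope `c / ((x + c) (y + c)) ≤ 1 / (y + c)` between two points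
`x, y ≥ 0`, so pointwise `|L(t) - L(e)| ≤ |t² - e²| / (e² + c) = L(e) · |t² - e²| / e²`;
integrating this bound gives the theorem. -/

open MeasureTheory

theorem div_add_sub_div_add {c x y : ℝ} (hx : x + c ≠ 0) (hy : y + c ≠ 0) :
    x / (x + c) - y / (y + c) = c * (x - y) / ((x + c) * (y + c)) := by
  field_simp
  ring

theorem abs_div_add_sub_div_add_le {c x y : ℝ} (hc : 0 < c) (hx : 0 ≤ x) (hy : 0 ≤ y) :
    |x / (x + c) - y / (y + c)| ≤ |x - y| / (y + c) := by
  have hxc : 0 < x + c := by positivity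
  have hyc : 0 < y + c := by positivity
  rw [div_add_sub_div_add hxc.ne' hyc.ne', abs_div, abs_mul, abs_of_pos hc,
    abs_of_pos (mul_pos hxc hyc), div_le_div_iff₀ (mul_pos hxc hyc) hyc]
  nlinarith [mul_nonneg (mul_nonneg (abs_nonneg (x - y)) hyc.le) hx]

theorem integral_abs_div_add_sub_div_add_le {Ω : Type*} [MeasurableSpace Ω] {μ : Measure Ω}
    {c y : ℝ} {f : Ω → ℝ} (hc : 0 < c) (hf : ∀ ω, 0 ≤ f ω) (hy : 0 ≤ y)
    (hint : Integrable (fun ω => |f ω - y|) μ) :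
    ∫ ω, |f ω / (f ω + c) - y / (y + c)| ∂μ ≤ (∫ ω, |f ω - y| ∂μ) / (y + c) := by
  rw [← integral_div]
  -- No integrability of the left integrand is needed: where it fails, that integral is `0`.
  exact integral_mono_of_nonneg (.of_forall fun _ => abs_nonneg _) (hint.div_const _)
    (.of_forall fun ω => abs_div_add_sub_div_add_le hc (hf ω) hy)

theorem rqf_expected_relative_noise_effect_le_mse_general
    {Ω : Type*} [MeasurableSpace Ω] (μ : Measure Ω)
    (c e : ℝ) (hc : 0 < c) (he : e ≠ 0) (ε : Ω → ℝ)
    (hmse : Integrable (fun ω => |(e + ε ω) ^ 2 - e ^ 2|) μ) :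
    (∫ ω, |(e + ε ω) ^ 2 / ((e + ε ω) ^ 2 + c) - e ^ 2 / (e ^ 2 + c)| ∂μ) /
        (e ^ 2 / (e ^ 2 + c)) ≤
      (∫ ω, |(e + ε ω) ^ 2 - e ^ 2| ∂μ) / e ^ 2 := by
  have he2 : 0 < e ^ 2 := by positivity
  have hbound := integral_abs_div_add_sub_div_add_le hc (fun ω => sq_nonneg (e + ε ω))
    he2.le hmse
  calc (∫ ω, |(e + ε ω) ^ 2 / ((e + ε ω) ^ 2 + c) - e ^ 2 / (e ^ 2 + c)| ∂μ) /
        (e ^ 2 / (e ^ 2 + c))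
      ≤ (∫ ω, |(e + ε ω) ^ 2 - e ^ 2| ∂μ) / (e ^ 2 + c) / (e ^ 2 / (e ^ 2 + c)) := by
        gcongr
    _ = (∫ ω, |(e + ε ω) ^ 2 - e ^ 2| ∂μ) / e ^ 2 := by
        field_simp

theorem rqf_expected_relative_noise_effect_le_mse
    {Ω : Type*} [MeasurableSpace Ω] (μ : Measure Ω) [IsProbabilityMeasure μ]
    (c e : ℝ) (hc : 0 < c) (he : e ≠ 0) (ε : Ω → ℝ)
    (hεint : Integrable ε μ)
    (hmse : Integrable (fun ω => |(e + ε ω) ^ 2 - e ^ 2|) μ) :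
    (∫ ω, |(e + ε ω) ^ 2 / ((e + ε ω) ^ 2 + c) - e ^ 2 / (e ^ 2 + c)| ∂μ) /
        (e ^ 2 / (e ^ 2 + c)) ≤
      (∫ ω, |(e + ε ω) ^ 2 - e ^ 2| ∂μ) / e ^ 2 :=
  rqf_expected_relative_noise_effect_le_mse_general μ c e hc he ε hmse
end
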